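/- Fix z ≥ 0 and a positive integer u, and let p_1 < p_2 < … < p_u be primes with p_{i+1} > p_i^{e^z} for every 1 ≤ i ≤ u − 1. Then E[ B_{p_1} ⋯ B_{p_u} ] = ∏_{i=1}^{u} ( (1/p_i) · ∏_{q prime, p_i < q ≤ p_i^{e^z}} (1 − 1/q) ). Moreover, if instead p_{i+1} ≤ p_i^{e^z} for some i, then E[ B_{p_1} ⋯ B_{p_u} ] = 0. -/

import Mathlib

open MeasureTheory ProbabilityTheory Filter Finset
open scoped Classical ENNReal

/-- The set of primes `q` with `p < q ≤ p ^ (e ^ z)`. -/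
noncomputable def primesBetween (z : ℝ) (p : ℕ) : Finset ℕ :=
  (Finset.range (⌊(p : ℝ) ^ Real.exp z⌋₊ + 1)).filter (fun q => q.Prime ∧ p < q)

/-- The random variable `B_p = X_p · ∏_{p < q ≤ p^{e^z}} (1 - X_q)`. -/
noncomputable def B {Ω : Type*} (z : ℝ) (X : ℕ → Ω → ℝ) (p : ℕ) (ω : Ω) : ℝ :=
  X p ω * ∏ q ∈ primesBetween z p, (1 - X q ω)

/-!
Each `X_q` is almost surely `0` or `1`. Under the gap condition the blocks
`{p_i} ∪ (p_i, p_i^{e^z}]` are pairwise disjoint and no `p_j` lies in another block, so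
`∏ B_{p_i}` is a product of `X_q` over the `p_i` and of `1 - X_q` over the remaining primes of
the blocks, each prime occurring once; independence then factors the expectation.
If instead `p_{i+1} ≤ p_i^{e^z}`, the product contains `X_q (1 - X_q)` for `q = p_{i+1}`,
which vanishes almost surely.
-/

theorem Finset.prod_mul_prod_eq_prod_image_mul_prod_biUnion {ι κ M : Type*} [CommMonoid M]
    [DecidableEq κ] {s : Finset ι} {p : ι → κ} {S : ι → Finset κ} (hp : Set.InjOn p s)
    (hS : (s : Set ι).PairwiseDisjoint S) (F G : κ → M) :
    ∏ i ∈ s, F (p i) * ∏ q ∈ S i, G q = (∏ q ∈ s.image p, F q) * ∏ q ∈ s.biUnion S, G q := by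
  rw [prod_mul_distrib, prod_image hp, prod_biUnion hS]

section Independence

variable {Ω ι : Type*} [MeasurableSpace Ω] {μ : Measure Ω} {f : ι → Ω → ℝ}

theorem ProbabilityTheory.iIndepFun.integral_finset_prod_comp (h : iIndepFun f μ)
    (hf : ∀ i, AEMeasurable (f i) μ) {g : ι → ℝ → ℝ} (hg : ∀ i, Measurable (g i))
    (s : Finset ι) :
    ∫ ω, ∏ i ∈ s, g i (f i ω) ∂μ = ∏ i ∈ s, ∫ ω, g i (f i ω) ∂μ := by
  have := (h.precomp (g := ((↑) : s → ι)) Subtype.val_injective).integral_fun_prod_comp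
    (fun i => hf i) (fun i => (hg i).aestronglyMeasurable)
  rwa [prod_coe_sort s fun i => ∫ ω, g i (f i ω) ∂μ,
    integral_congr_ae (.of_forall fun ω => prod_coe_sort s fun i => g i (f i ω))] at this

theorem ProbabilityTheory.iIndepFun.integral_prod_mul_prod_one_sub (h : iIndepFun f μ)
    (hf : ∀ i, AEMeasurable (f i) μ) {s t : Finset ι} (hst : Disjoint s t) :
    ∫ ω, (∏ i ∈ s, f i ω) * ∏ i ∈ t, (1 - f i ω) ∂μ
      = (∏ i ∈ s, ∫ ω, f i ω ∂μ) * ∏ i ∈ t, ∫ ω, (1 - f i ω) ∂μ := by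
  let g : ι → ℝ → ℝ := fun i x => if i ∈ s then x else 1 - x
  have hg : ∀ i, Measurable (g i) := fun i => by
    by_cases hi : i ∈ s <;> simp only [g, hi, if_true, if_false] <;> fun_prop
  have split (H : ι → (ℝ → ℝ) → ℝ) :
      ∏ i ∈ s ∪ t, H i (g i) = (∏ i ∈ s, H i id) * ∏ i ∈ t, H i (1 - ·) := by
    rw [prod_union hst]
    congr 1 <;> refine prod_congr rfl fun i hi => ?_
    · simp only [g, if_pos hi]; rfl
    · simp only [g, if_neg (disjoint_right.1 hst hi)]
  calc ∫ ω, (∏ i ∈ s, f i ω) * ∏ i ∈ t, (1 - f i ω) ∂μ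
      = ∫ ω, ∏ i ∈ s ∪ t, g i (f i ω) ∂μ := by
        congr 1 with ω
        exact (split fun i φ => φ (f i ω)).symm
    _ = ∏ i ∈ s ∪ t, ∫ ω, g i (f i ω) ∂μ := h.integral_finset_prod_comp hf hg _
    _ = _ := split fun i φ => ∫ ω, φ (f i ω) ∂μ

end Independence

section Bernoulli

variable {Ω : Type*} [MeasurableSpace Ω] {μ : Measure Ω} [IsProbabilityMeasure μ]
  {X : Ω → ℝ} {r : ℝ}

theorem ae_eq_zero_or_eq_one_of_measure_eq (hX : Measurable X) (hr0 : 0 ≤ r) (hr1 : r ≤ 1)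
    (h1 : μ {ω | X ω = 1} = ENNReal.ofReal r) (h0 : μ {ω | X ω = 0} = ENNReal.ofReal (1 - r)) :
    ∀ᵐ ω ∂μ, X ω = 0 ∨ X ω = 1 := by
  have hdisj : Disjoint {ω | X ω = 0} {ω | X ω = 1} :=
    Set.disjoint_left.2 fun ω h0 h1 => zero_ne_one (h0.symm.trans h1)
  rw [ae_iff_prob_eq_one (by fun_prop), Set.ofPred_or,
    measure_union hdisj (hX (measurableSet_singleton 1)), h0, h1,
    ← ENNReal.ofReal_add (by linarith) hr0, sub_add_cancel, ENNReal.ofReal_one]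

theorem integrable_and_integral_eq_of_measure_eq (hX : Measurable X) (hr0 : 0 ≤ r)
    (hr1 : r ≤ 1) (h1 : μ {ω | X ω = 1} = ENNReal.ofReal r)
    (h0 : μ {ω | X ω = 0} = ENNReal.ofReal (1 - r)) :
    Integrable X μ ∧ ∫ ω, X ω ∂μ = r := by
  have hind : X =ᵐ[μ] {ω | X ω = 1}.indicator 1 := by
    filter_upwards [ae_eq_zero_or_eq_one_of_measure_eq hX hr0 hr1 h1 h0] with ω hω
    rcases hω with hω | hω <;> simp [Set.indicator, hω]
  have hs : MeasurableSet {ω | X ω = 1} := hX (measurableSet_singleton 1)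
  refine ⟨((integrable_const 1).indicator hs).congr hind.symm, ?_⟩
  rw [integral_congr_ae hind, integral_indicator_one hs, measureReal_def, h1,
    ENNReal.toReal_ofReal hr0]

end Bernoulli

theorem mem_primesBetween {z : ℝ} {p q : ℕ} :
    q ∈ primesBetween z p ↔ q.Prime ∧ p < q ∧ (q : ℝ) ≤ (p : ℝ) ^ Real.exp z := by
  rw [primesBetween, mem_filter, mem_range, Nat.lt_succ_iff, Nat.le_floor_iff (by positivity)]
  tauto

theorem lt_of_mem_primesBetween {z : ℝ} {p q n : ℕ} (hq : q ∈ primesBetween z p)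
    (hn : (p : ℝ) ^ Real.exp z < n) : q < n := by
  exact_mod_cast (mem_primesBetween.1 hq).2.2.trans_lt hn

section Separated

variable {z : ℝ} {u : ℕ} {p : Fin u → ℕ}

theorem rpow_exp_lt_of_lt (hmono : Monotone p)
    (hgap : ∀ i : ℕ, ∀ hi : i + 1 < u,
      ((p ⟨i, Nat.lt_of_succ_lt hi⟩ : ℕ) : ℝ) ^ Real.exp z < ((p ⟨i + 1, hi⟩ : ℕ) : ℝ))
    {i j : Fin u} (hij : i < j) : (p i : ℝ) ^ Real.exp z < p j := by
  have hi : (i : ℕ) + 1 < u := by omega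
  calc (p i : ℝ) ^ Real.exp z < p ⟨i + 1, hi⟩ := hgap i hi
    _ ≤ p j := by exact_mod_cast hmono (Fin.mk_le_of_le_val (Fin.lt_def.1 hij))

theorem pairwiseDisjoint_primesBetween
    (hsep : ∀ i j, i < j → (p i : ℝ) ^ Real.exp z < p j) :
    ((univ : Finset (Fin u)) : Set (Fin u)).PairwiseDisjoint fun i => primesBetween z (p i) := by
  suffices h : ∀ i j, i < j → Disjoint (primesBetween z (p i)) (primesBetween z (p j)) from
    fun i _ j _ hij => hij.lt_or_gt.elim (h i j) fun hji => (h j i hji).symm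
  intro i j hij
  refine disjoint_left.2 fun q hqi hqj => ?_
  exact (lt_of_mem_primesBetween hqi (hsep i j hij)).not_gt (mem_primesBetween.1 hqj).2.1

theorem not_mem_primesBetween (hmono : Monotone p)
    (hsep : ∀ i j, i < j → (p i : ℝ) ^ Real.exp z < p j) (i j : Fin u) :
    p j ∉ primesBetween z (p i) := fun h => by
  rcases lt_or_ge i j with hij | hji
  · exact (lt_of_mem_primesBetween h (hsep i j hij)).false
  · exact (hmono hji).not_gt (mem_primesBetween.1 h).2.1

end Separated

theorem prod_B_eq_zero {Ω ι : Type*} [Fintype ι] {z : ℝ} {X : ℕ → Ω → ℝ} {ω : Ω} {p : ι → ℕ}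
    {i j : ι} (hj : p j ∈ primesBetween z (p i)) (hω : X (p j) ω = 0 ∨ X (p j) ω = 1) :
    ∏ k, B z X (p k) ω = 0 := by
  rcases hω with h0 | h1
  · exact prod_eq_zero (mem_univ j) (by rw [B, h0, zero_mul])
  · refine prod_eq_zero (mem_univ i) ?_
    rw [B, prod_eq_zero hj (by rw [h1, sub_self]), mul_zero]

section PrimeIndexed

variable {Ω : Type*} [MeasurableSpace Ω] {μ : Measure Ω} {X : ℕ → Ω → ℝ}

theorem integral_prod_mul_prod_one_sub_of_iIndepFun_primes
    (hmeas : ∀ p : ℕ, p.Prime → Measurable (X p))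
    (hindep : iIndepFun (fun p : {p : ℕ // p.Prime} => X p.1) μ) {s t : Finset ℕ}
    (hs : ∀ q ∈ s, q.Prime) (ht : ∀ q ∈ t, q.Prime) (hst : Disjoint s t) :
    ∫ ω, (∏ q ∈ s, X q ω) * ∏ q ∈ t, (1 - X q ω) ∂μ
      = (∏ q ∈ s, ∫ ω, X q ω ∂μ) * ∏ q ∈ t, ∫ ω, (1 - X q ω) ∂μ := by
  have hst' : Disjoint (s.subtype Nat.Prime) (t.subtype Nat.Prime) :=
    disjoint_left.2 fun q hqs hqt => disjoint_left.1 hst (mem_subtype.1 hqs) (mem_subtype.1 hqt)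
  have := hindep.integral_prod_mul_prod_one_sub (fun q => (hmeas q.1 q.2).aemeasurable) hst'
  rwa [prod_subtype_of_mem (fun q => ∫ ω, X q ω ∂μ) hs,
    prod_subtype_of_mem (fun q => ∫ ω, 1 - X q ω ∂μ) ht, integral_congr_ae (.of_forall fun ω =>
      by rw [prod_subtype_of_mem (X · ω) hs, prod_subtype_of_mem (1 - X · ω) ht])] at this

theorem integral_prod_B_of_separated [IsProbabilityMeasure μ] {z : ℝ}
    (hmeas : ∀ p : ℕ, p.Prime → Measurable (X p))
    (hindep : iIndepFun (fun p : {p : ℕ // p.Prime} => X p.1) μ) {m : ℕ → ℝ}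
    (hint : ∀ q : ℕ, q.Prime → Integrable (X q) μ)
    (hm : ∀ q : ℕ, q.Prime → ∫ ω, X q ω ∂μ = m q) {u : ℕ} {p : Fin u → ℕ}
    (hp : ∀ i, (p i).Prime) (hmono : StrictMono p)
    (hsep : ∀ i j, i < j → (p i : ℝ) ^ Real.exp z < p j) :
    ∫ ω, ∏ i, B z X (p i) ω ∂μ = ∏ i, m (p i) * ∏ q ∈ primesBetween z (p i), (1 - m q) := by
  set T := univ.biUnion fun i => primesBetween z (p i)
  have hsplit (F G : ℕ → ℝ) := prod_mul_prod_eq_prod_image_mul_prod_biUnion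
    hmono.injective.injOn (pairwiseDisjoint_primesBetween hsep) F G
  have himage : ∀ q ∈ univ.image p, q.Prime := by simp [hp]
  have hT : ∀ q ∈ T, q.Prime := by
    simp only [T, mem_biUnion]
    rintro q ⟨i, -, hq⟩
    exact (mem_primesBetween.1 hq).1
  have hdisj : Disjoint (univ.image p) T := by
    simp only [T, disjoint_left, mem_image, mem_biUnion]
    rintro _ ⟨j, -, rfl⟩ ⟨i, -, hj⟩
    exact not_mem_primesBetween hmono.monotone hsep i j hj
  calc ∫ ω, ∏ i, B z X (p i) ω ∂μ
      = ∫ ω, (∏ q ∈ univ.image p, X q ω) * ∏ q ∈ T, (1 - X q ω) ∂μ := by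
        congr 1 with ω
        exact hsplit (X · ω) (1 - X · ω)
    _ = _ := integral_prod_mul_prod_one_sub_of_iIndepFun_primes hmeas hindep himage hT hdisj
    _ = _ := by
      rw [hsplit]
      congr 1
      · exact prod_congr rfl fun q hq => hm q (himage q hq)
      · refine prod_congr rfl fun q hq => ?_
        rw [integral_sub (integrable_const 1) (hint q (hT q hq)), hm q (hT q hq)]
        simp

end PrimeIndexed

theorem expectation_product_Bp_general (z : ℝ) (u : ℕ)
    {Ω : Type*} [MeasurableSpace Ω] (μ : Measure Ω) [IsProbabilityMeasure μ]
    (X : ℕ → Ω → ℝ)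
    (hmeas : ∀ p : ℕ, p.Prime → Measurable (X p))
    (hindep : iIndepFun (fun p : {p : ℕ // p.Prime} => X p.1) μ)
    (hone : ∀ p : ℕ, p.Prime → μ {ω | X p ω = 1} = ENNReal.ofReal (1 / p))
    (hzero : ∀ p : ℕ, p.Prime → μ {ω | X p ω = 0} = ENNReal.ofReal (1 - 1 / p))
    (p : Fin u → ℕ) (hp : ∀ i, (p i).Prime) (hmono : StrictMono p) :
    ((∀ i : ℕ, ∀ hi : i + 1 < u,
        ((p ⟨i, Nat.lt_of_succ_lt hi⟩ : ℕ) : ℝ) ^ Real.exp z < ((p ⟨i + 1, hi⟩ : ℕ) : ℝ)) →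
      (∫ ω, ∏ i, B z X (p i) ω ∂μ)
        = ∏ i, (1 / (p i : ℝ)) * ∏ q ∈ primesBetween z (p i), (1 - 1 / (q : ℝ))) ∧
    ((∃ i : ℕ, ∃ hi : i + 1 < u,
        ((p ⟨i + 1, hi⟩ : ℕ) : ℝ) ≤ ((p ⟨i, Nat.lt_of_succ_lt hi⟩ : ℕ) : ℝ) ^ Real.exp z) →
      (∫ ω, ∏ i, B z X (p i) ω ∂μ) = 0) := by
  have hr0 (q : ℕ) : (0 : ℝ) ≤ 1 / q := by positivity
  have hr1 {q : ℕ} (hq : q.Prime) : (1 : ℝ) / q ≤ 1 :=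
    div_le_one_of_le₀ (by exact_mod_cast hq.one_lt.le) (Nat.cast_nonneg q)
  have hbern {q : ℕ} (hq : q.Prime) :=
    ae_eq_zero_or_eq_one_of_measure_eq (hmeas q hq) (hr0 q) (hr1 hq) (hone q hq) (hzero q hq)
  have hX {q : ℕ} (hq : q.Prime) :=
    integrable_and_integral_eq_of_measure_eq (hmeas q hq) (hr0 q) (hr1 hq) (hone q hq) (hzero q hq)
  refine ⟨fun hgap => ?_, fun ⟨i, hi, hle⟩ => ?_⟩
  · exact integral_prod_B_of_separated hmeas hindep (fun q hq => (hX hq).1)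
      (fun q hq => (hX hq).2) hp hmono fun i j => rpow_exp_lt_of_lt hmono.monotone hgap
  · have hmem : p ⟨i + 1, hi⟩ ∈ primesBetween z (p ⟨i, Nat.lt_of_succ_lt hi⟩) :=
      mem_primesBetween.2 ⟨hp _, hmono (Fin.mk_lt_mk.2 i.lt_succ_self), hle⟩
    exact integral_eq_zero_of_ae ((hbern (hp _)).mono fun ω hω => prod_B_eq_zero hmem hω)

theorem expectation_product_Bp (z : ℝ) (hz : 0 ≤ z) (u : ℕ) (hu : 0 < u)
    {Ω : Type*} [MeasurableSpace Ω] (μ : Measure Ω) [IsProbabilityMeasure μ]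
    (X : ℕ → Ω → ℝ)
    (hmeas : ∀ p : ℕ, p.Prime → Measurable (X p))
    (hindep : iIndepFun (fun p : {p : ℕ // p.Prime} => X p.1) μ)
    (hone : ∀ p : ℕ, p.Prime → μ {ω | X p ω = 1} = ENNReal.ofReal (1 / p))
    (hzero : ∀ p : ℕ, p.Prime → μ {ω | X p ω = 0} = ENNReal.ofReal (1 - 1 / p))
    (p : Fin u → ℕ) (hp : ∀ i, (p i).Prime) (hmono : StrictMono p) :
    ((∀ i : ℕ, ∀ hi : i + 1 < u,
        ((p ⟨i, Nat.lt_of_succ_lt hi⟩ : ℕ) : ℝ) ^ Real.exp z < ((p ⟨i + 1, hi⟩ : ℕ) : ℝ)) →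
      (∫ ω, ∏ i, B z X (p i) ω ∂μ)
        = ∏ i, (1 / (p i : ℝ)) * ∏ q ∈ primesBetween z (p i), (1 - 1 / (q : ℝ))) ∧
    ((∃ i : ℕ, ∃ hi : i + 1 < u,
        ((p ⟨i + 1, hi⟩ : ℕ) : ℝ) ≤ ((p ⟨i, Nat.lt_of_succ_lt hi⟩ : ℕ) : ℝ) ^ Real.exp z) →
      (∫ ω, ∏ i, B z X (p i) ω ∂μ) = 0) :=
  expectation_product_Bp_general z u μ X hmeas hindep hone hzero p hp hmono
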